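/- arXiv:1808.08673 — 7 statements merged into one kernel-verified Lean document; each statement's English description precedes it below -/
import Mathlib

section
/- Let (X, μ) be a probability space and T : X → X a measure-preserving transformation which is mixing, i.e. for all measurable sets A, B one has μ(A ∩ T⁻ⁿB) → μ(A)·μ(B) as n → ∞. Suppose f ∈ L²(μ) is such that there exists a constant C ≥ 0 with ‖f + f∘T + ⋯ + f∘Tⁿ‖_{L²(μ)} ≤ C for all n ≥ 1. Then there exists h ∈ L²(μ) such that f = h − h∘T holds μ-almost everywhere. -/
/-! Let `U` be the Koopman isometry `g ↦ g ∘ T` of `L²(μ)` and `Sₙ = f + U f + ⋯ + Uⁿ⁻¹ f`.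
If every `‖Sₙ‖ ≤ C`, the Cesàro means `x_N` of `S₀, …, S_N` stay in the ball of radius `C`, while
`(1 - U) x_N = f - S_{N+1} / (N + 1) → f`. Pairing with `g` gives `|⟪f, g⟫| ≤ C ‖(1 - U)† g‖`,
so `g ↦ ⟪f, g⟫` factors through `(1 - U)†` as a bounded functional on its range. Hahn–Banach and
Riesz turn it into `h` with `⟪h, (1 - U)† g⟫ = ⟪f, g⟫` for all `g`, that is `f = h - U h`. -/

open MeasureTheory Filter Function
open scoped InnerProductSpace

section BirkhoffSum

variable {G M : Type*} [AddCommGroup M] [FunLike G M M] [AddMonoidHomClass G M M]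

theorem birkhoffSum_id_sub_map (U : G) (f : M) (n : ℕ) :
    birkhoffSum U id n f - U (birkhoffSum U id n f) = f - U^[n] f := by
  simp only [birkhoffSum, id, map_sum, ← iterate_succ_apply' U]
  rw [← Finset.sum_sub_distrib, Finset.sum_range_sub' (fun k => U^[k] f)]
  rfl

theorem sum_range_birkhoffSum_id_sub_map (U : G) (f : M) (N : ℕ) :
    ∑ n ∈ Finset.range N, birkhoffSum U id n f - U (∑ n ∈ Finset.range N, birkhoffSum U id n f) =
      N • f - birkhoffSum U id N f := by
  simp only [map_sum, ← Finset.sum_sub_distrib, birkhoffSum_id_sub_map]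
  rw [Finset.sum_sub_distrib, Finset.sum_const, Finset.card_range]
  rfl

end BirkhoffSum

section Hilbert

variable {𝕜 E F : Type*} [RCLike 𝕜] [NormedAddCommGroup E] [InnerProductSpace 𝕜 E]
  [CompleteSpace E]

theorem LinearMap.exists_inner_eq_of_norm_le_mul_norm {G : Type*} [AddCommGroup G] [Module 𝕜 G]
    (W : G →ₗ[𝕜] E) (φ : G →ₗ[𝕜] 𝕜) {C : ℝ} (hφ : ∀ g, ‖φ g‖ ≤ C * ‖W g‖) :
    ∃ h : E, ∀ g, ⟪h, W g⟫_𝕜 = φ g := by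
  have hker : ker W ≤ ker φ := fun g hg => by simpa [mem_ker.1 hg] using hφ g
  let ψ : range W →ₗ[𝕜] 𝕜 := (ker W).liftQ φ hker ∘ₗ W.quotKerEquivRange.symm.toLinearMap
  have hψ : ∀ g, ψ ⟨W g, mem_range_self W g⟩ = φ g := fun g => by
    simp [ψ, quotKerEquivRange_symm_apply_image]
  have hψC : ∀ y, ‖ψ y‖ ≤ C * ‖y‖ := by
    rintro ⟨_, g, rfl⟩
    simpa [hψ] using hφ g
  obtain ⟨Λ, hΛ, -⟩ := exists_extension_norm_eq _ (ψ.mkContinuous C hψC)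
  refine ⟨(InnerProductSpace.toDual 𝕜 E).symm Λ, fun g => ?_⟩
  rw [InnerProductSpace.toDual_symm_apply, ← hψ]
  exact hΛ ⟨W g, mem_range_self W g⟩

theorem ContinuousLinearMap.mem_range_of_tendsto_of_norm_le [NormedAddCommGroup F]
    [InnerProductSpace 𝕜 F] [CompleteSpace F] (V : E →L[𝕜] F) {x : ℕ → E} {C : ℝ}
    (hx : ∀ n, ‖x n‖ ≤ C) {y : F} (hVx : Tendsto (fun n => V (x n)) atTop (nhds y)) :
    y ∈ V.range := by
  have hbound : ∀ g, ‖⟪y, g⟫_𝕜‖ ≤ C * ‖adjoint V g‖ := fun g => by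
    refine le_of_tendsto' (hVx.inner tendsto_const_nhds).norm fun n => ?_
    rw [← adjoint_inner_right]
    exact (norm_inner_le_norm _ _).trans (by gcongr; exact hx n)
  obtain ⟨h, hh⟩ := LinearMap.exists_inner_eq_of_norm_le_mul_norm
    (adjoint V : F →L[𝕜] E).toLinearMap (innerₛₗ 𝕜 y) hbound
  exact ⟨h, ext_inner_right 𝕜 fun g => by simpa [adjoint_inner_right] using hh g⟩

theorem ContinuousLinearMap.exists_eq_sub_apply_of_norm_birkhoffSum_le (U : E →L[𝕜] E) {f : E}
    {C : ℝ} (hS : ∀ n, ‖birkhoffSum U id n f‖ ≤ C) : ∃ h, f = h - U h := by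
  let x : ℕ → E := fun N =>
    ((N + 1 : ℕ) : 𝕜)⁻¹ • ∑ n ∈ Finset.range (N + 1), birkhoffSum U id n f
  have hx : ∀ N, ‖x N‖ ≤ C := fun N => by
    have : ‖∑ n ∈ Finset.range (N + 1), birkhoffSum U id n f‖ ≤ (N + 1 : ℕ) * C := by
      simpa using norm_sum_le_of_le (Finset.range (N + 1)) fun n _ => hS n
    rwa [norm_smul, norm_inv, RCLike.norm_natCast, inv_mul_le_iff₀ (by positivity)]
  have hVx : ∀ N, (1 - U) (x N) = f - ((N + 1 : ℕ) : 𝕜)⁻¹ • birkhoffSum U id (N + 1) f :=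
    fun N => by
      rw [sub_apply, one_apply_eq_self, map_smul, ← smul_sub, sum_range_birkhoffSum_id_sub_map,
        smul_sub, ← Nat.cast_smul_eq_nsmul 𝕜, smul_smul,
        inv_mul_cancel₀ (Nat.cast_ne_zero.2 N.succ_ne_zero), one_smul]
  have hS_div : Tendsto (fun N : ℕ => ((N + 1 : ℕ) : 𝕜)⁻¹ • birkhoffSum U id (N + 1) f) atTop
      (nhds 0) := by
    refine squeeze_zero_norm (fun N => ?_)
      (by simpa using (tendsto_one_div_add_atTop_nhds_zero_nat (𝕜 := ℝ)).const_mul C)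
    rw [norm_smul, norm_inv, RCLike.norm_natCast, Nat.cast_succ, mul_comm C]
    gcongr
    exact hS _
  obtain ⟨h, hh⟩ := (1 - U).mem_range_of_tendsto_of_norm_le hx
    (y := f) (by simpa [hVx] using tendsto_const_nhds.sub hS_div)
  exact ⟨h, by simpa using hh.symm⟩

end Hilbert

namespace MeasureTheory.Lp

variable {α E : Type*} [MeasurableSpace α] [NormedAddCommGroup E] {p : ENNReal} {μ : Measure α}
  {T : α → α}

theorem coeFn_birkhoffSum_compMeasurePreserving (hT : MeasurePreserving T μ μ) (g : Lp E p μ)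
    (n : ℕ) :
    ((birkhoffSum (compMeasurePreserving T hT) id n g : Lp E p μ) : α → E) =ᵐ[μ]
      birkhoffSum T g n := by
  induction n with
  | zero => simpa using coeFn_zero E p μ
  | succ n ih =>
    rw [birkhoffSum_succ, id, compMeasurePreserving_iterate]
    filter_upwards [coeFn_add (birkhoffSum (compMeasurePreserving T hT) id n g) _, ih,
      coeFn_compMeasurePreserving g (hT.iterate n)] with x hadd hS hg
    rw [hadd, Pi.add_apply, hS, hg, birkhoffSum_succ]
    rfl

theorem norm_birkhoffSum_compMeasurePreserving_toLp (hT : MeasurePreserving T μ μ) {f : α → E}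
    (hf : MemLp f p μ) (n : ℕ) :
    ‖birkhoffSum (compMeasurePreserving T hT) id n (hf.toLp f)‖ =
      (eLpNorm (birkhoffSum T f n) p μ).toReal := by
  rw [norm_def, eLpNorm_congr_ae ((coeFn_birkhoffSum_compMeasurePreserving hT _ n).trans
    (hT.quasiMeasurePreserving.birkhoffSum_ae_eq_of_ae_eq hf.coeFn_toLp n))]

end MeasureTheory.Lp

theorem l2_bounded_birkhoff_sums_coboundary_general
    {X : Type*} [MeasurableSpace X] (μ : Measure X)
    (T : X → X) (hT : MeasurePreserving T μ μ)
    (f : X → ℝ) (hf : MemLp f 2 μ)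
    (C : ℝ)
    (hbound : ∀ n : ℕ, 1 ≤ n →
      eLpNorm (fun x => ∑ i ∈ Finset.range (n + 1), f (T^[i] x)) 2 μ ≤ ENNReal.ofReal C) :
    ∃ h : X → ℝ, MemLp h 2 μ ∧ ∀ᵐ x ∂μ, f x = h x - h (T x) := by
  let U := (Lp.compMeasurePreservingₗᵢ ℝ T hT : Lp ℝ 2 μ →ₗᵢ[ℝ] Lp ℝ 2 μ).toContinuousLinearMap
  have hS : ∀ n, ‖birkhoffSum U id n (hf.toLp f)‖ ≤ max C ‖hf.toLp f‖ := by
    rintro (_ | _ | n)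
    · simp
    · simp
    · calc ‖birkhoffSum U id (n + 2) (hf.toLp f)‖
          = (eLpNorm (birkhoffSum T f (n + 2)) 2 μ).toReal :=
            Lp.norm_birkhoffSum_compMeasurePreserving_toLp hT hf _
        _ ≤ (ENNReal.ofReal C).toReal :=
            ENNReal.toReal_mono ENNReal.ofReal_ne_top (hbound (n + 1) le_add_self)
        _ = max C 0 := ENNReal.toReal_ofReal'
        _ ≤ max C ‖hf.toLp f‖ := max_le_max_left _ (norm_nonneg _)
  obtain ⟨h, hfh⟩ := U.exists_eq_sub_apply_of_norm_birkhoffSum_le hS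
  refine ⟨h, Lp.memLp h, ?_⟩
  filter_upwards [hf.coeFn_toLp, Lp.coeFn_sub h (U h), Lp.coeFn_compMeasurePreserving h hT]
    with x hfx hsub hUh
  rw [← hfx, hfh, hsub]
  exact congrArg (h x - ·) hUh

/-- If `T` is a mixing measure-preserving transformation of a probability
space `(X, μ)` and `f ∈ L²(μ)` has uniformly `L²`-bounded Birkhoff sums
`f + f∘T + ⋯ + f∘Tⁿ` for all `n ≥ 1`, then `f` is an `L²` coboundary:
`f = h - h∘T` a.e. for some `h ∈ L²(μ)`. -/
theorem l2_bounded_birkhoff_sums_coboundary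
    {X : Type*} [MeasurableSpace X] (μ : Measure X) [IsProbabilityMeasure μ]
    (T : X → X) (hT : MeasurePreserving T μ μ)
    (hmix : ∀ A B : Set X, MeasurableSet A → MeasurableSet B →
      Tendsto (fun n : ℕ => μ (A ∩ T^[n] ⁻¹' B)) atTop (nhds (μ A * μ B)))
    (f : X → ℝ) (hf : MemLp f 2 μ)
    (C : ℝ) (hC : 0 ≤ C)
    (hbound : ∀ n : ℕ, 1 ≤ n →
      eLpNorm (fun x => ∑ i ∈ Finset.range (n + 1), f (T^[i] x)) 2 μ ≤ ENNReal.ofReal C) :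
    ∃ h : X → ℝ, MemLp h 2 μ ∧ ∀ᵐ x ∂μ, f x = h x - h (T x) :=
  l2_bounded_birkhoff_sums_coboundary_general μ T hT f hf C hbound
end

section
/- Let (X, μ) be a probability space and T : X → X an invertible measure-preserving transformation (with measurable measure-preserving inverse). Suppose f ∈ L¹(μ) satisfies ∫_X f dμ = 0 and there is a constant C ≥ 0 such that ∫_X e^{S_N f} dμ ≤ C for all N ≥ 1, where S_N f := ∑_{i=0}^{N−1} f∘Tⁱ. Then there exists a constant C′ depending only on C such that for all L ≥ 0, μ({x ∈ X : f(x) ≤ −L}) ≤ C′ · e^{−L/6}. -/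
/-!
Fix `δ > 0` and `M = ⌊δ⁻¹⌋`. By Chernoff's bound, the points `x` from which some orbit segment
of length `b ≤ M`, starting right after `x` or ending right before `x`, has Birkhoff sum
`≥ L/2 + bδ` form a set of measure at most `2 C e^{-L/2} / δ`. On the rest `A` of `{f ≤ -L}`,
each visit of an orbit to `A` costs at least `L`, while the excursions between visits gain at
most `L/2 + (length) δ`; so along a window of length `M + 1` the number of visits to `A`, times
`L/2`, is at most `S⁻_{M+1} + L/2 + (M + 1)δ`. Integrating, with `∫ S⁻ = ∫ S⁺ ≤ ∫ e^S ≤ C`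
because `S` has mean zero, gives `(M + 1) μ(A) L/2 ≤ C + L/2 + (M + 1)δ`, i.e. `μ(A) = O(δ)`.
The choice `δ = e^{-L/4}` balances the two terms.
-/

open MeasureTheory Function Finset Real
open scoped ENNReal

section Chernoff

variable {X : Type*} [MeasurableSpace X] {μ : Measure X}

theorem measure_ge_le_of_lintegral_exp_le {h : X → ℝ} (hh : AEMeasurable h μ) {C : ℝ}
    (hC : ∫⁻ x, ENNReal.ofReal (exp (h x)) ∂μ ≤ ENNReal.ofReal C) (t : ℝ) :
    μ {x | t ≤ h x} ≤ ENNReal.ofReal (C * exp (-t)) := by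
  have hmarkov := mul_meas_ge_le_lintegral₀ hh.exp.ennreal_ofReal (ENNReal.ofReal (exp t))
  simp only [ENNReal.ofReal_le_ofReal_iff (exp_nonneg _), exp_le_exp] at hmarkov
  calc μ {x | t ≤ h x}
      = ENNReal.ofReal (exp (-t)) * (ENNReal.ofReal (exp t) * μ {x | t ≤ h x}) := by
        rw [← mul_assoc, ← ENNReal.ofReal_mul (exp_nonneg _), ← exp_add, neg_add_cancel,
          exp_zero, ENNReal.ofReal_one, one_mul]
    _ ≤ ENNReal.ofReal (exp (-t)) * ENNReal.ofReal C := by gcongr; exact hmarkov.trans hC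
    _ = ENNReal.ofReal (C * exp (-t)) := by rw [mul_comm, ENNReal.ofReal_mul' (exp_nonneg _)]

theorem sum_Icc_exp_neg_mul_le_inv {δ : ℝ} (hδ : 0 < δ) (M : ℕ) :
    ∑ b ∈ Icc 1 M, exp (-(b * δ)) ≤ δ⁻¹ := by
  set r := exp (-δ)
  have hr : δ * r ≤ 1 - r := by
    have := mul_le_mul_of_nonneg_left (add_one_le_exp δ) (exp_pos (-δ)).le
    rw [← exp_add, neg_add_cancel, exp_zero] at this
    linarith
  have hgeom : (∑ b ∈ Icc 1 M, r ^ b) * (1 - r) = r - r ^ (M + 1) := by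
    rw [← Ico_add_one_right_eq_Icc, ← neg_sub, mul_neg, geom_sum_Ico_mul r (by omega)]
    ring
  have hterm : ∀ b : ℕ, exp (-(b * δ)) = r ^ b := fun b => by rw [← exp_nat_mul]; ring_nf
  simp only [hterm]
  have hsum : 0 ≤ ∑ b ∈ Icc 1 M, r ^ b := sum_nonneg fun b _ => (pow_pos (exp_pos _) b).le
  rw [← one_div, le_div_iff₀ hδ]
  refine le_of_mul_le_mul_right ?_ (exp_pos (-δ))
  calc (∑ b ∈ Icc 1 M, r ^ b) * δ * r ≤ (∑ b ∈ Icc 1 M, r ^ b) * (1 - r) := by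
        rw [mul_assoc]; exact mul_le_mul_of_nonneg_left hr hsum
    _ ≤ 1 * r := by rw [hgeom, one_mul]; linarith [pow_pos (exp_pos (-δ)) (M + 1)]

theorem measure_biUnion_preimage_le_of_lintegral_exp_le {φ : ℕ → X → X}
    (hφ : ∀ b, MeasurePreserving (φ b) μ μ) {h : ℕ → X → ℝ} (hh : ∀ b, AEMeasurable (h b) μ)
    {C : ℝ} (hC : 0 ≤ C)
    (hexp : ∀ b, 1 ≤ b → ∫⁻ x, ENNReal.ofReal (exp (h b x)) ∂μ ≤ ENNReal.ofReal C)
    (c : ℝ) {δ : ℝ} (hδ : 0 < δ) (M : ℕ) :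
    μ (⋃ b ∈ Icc 1 M, φ b ⁻¹' {x | c + b * δ ≤ h b x}) ≤ ENNReal.ofReal (C * exp (-c) / δ) := by
  have hterm : ∀ b ∈ Icc 1 M, μ (φ b ⁻¹' {x | c + b * δ ≤ h b x})
      ≤ ENNReal.ofReal (C * exp (-c) * exp (-(b * δ))) := fun b hb => by
    rw [(hφ b).measure_preimage (nullMeasurableSet_le aemeasurable_const (hh b)), mul_assoc,
      ← exp_add, ← neg_add]
    exact measure_ge_le_of_lintegral_exp_le (hh b) (hexp b (mem_Icc.1 hb).1) _
  calc _ ≤ ∑ b ∈ Icc 1 M, μ (φ b ⁻¹' {x | c + b * δ ≤ h b x}) := measure_biUnion_finset_le _ _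
    _ ≤ ∑ b ∈ Icc 1 M, ENNReal.ofReal (C * exp (-c) * exp (-(b * δ))) := sum_le_sum hterm
    _ = ENNReal.ofReal (C * exp (-c) * ∑ b ∈ Icc 1 M, exp (-(b * δ))) := by
        rw [mul_sum, ENNReal.ofReal_sum_of_nonneg fun b _ => by positivity]
    _ ≤ ENNReal.ofReal (C * exp (-c) / δ) := by
        rw [div_eq_mul_inv]
        gcongr
        exact sum_Icc_exp_neg_mul_le_inv hδ M

theorem lintegral_ofReal_neg_le_lintegral_exp {S : X → ℝ} (hS : Integrable S μ)
    (h0 : ∫ x, S x ∂μ = 0) :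
    ∫⁻ x, ENNReal.ofReal (-S x) ∂μ ≤ ∫⁻ x, ENNReal.ofReal (exp (S x)) ∂μ := by
  have hparts := integral_eq_lintegral_pos_part_sub_lintegral_neg_part hS
  rw [h0, eq_comm, sub_eq_zero] at hparts
  have hfin := hS.neg.lintegral_lt_top.ne
  simp only [Pi.neg_apply] at hfin
  rw [← (ENNReal.toReal_eq_toReal_iff' hS.lintegral_lt_top.ne hfin).1 hparts]
  exact lintegral_mono fun x => ENNReal.ofReal_le_ofReal <|
    (le_add_of_nonneg_right zero_le_one).trans (add_one_le_exp _)

end Chernoff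

section Birkhoff

variable {X : Type*} [MeasurableSpace X] {μ : Measure X} {T : X → X}

theorem MeasureTheory.MeasurePreserving.lintegral_birkhoffSum (hT : MeasurePreserving T μ μ)
    {g : X → ℝ≥0∞} (hg : AEMeasurable g μ) (n : ℕ) :
    ∫⁻ x, birkhoffSum T g n x ∂μ = n * ∫⁻ x, g x ∂μ := by
  have hcomp : ∀ k, ∫⁻ x, g (T^[k] x) ∂μ = ∫⁻ x, g x ∂μ := fun k => by
    rw [← lintegral_map' (by rwa [(hT.iterate k).map_eq])
      (hT.iterate k).measurable.aemeasurable, (hT.iterate k).map_eq]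
  simp only [birkhoffSum]
  rw [lintegral_finsetSum' (f := fun k x => g (T^[k] x)) _ fun k _ =>
      hg.comp_quasiMeasurePreserving (hT.iterate k).quasiMeasurePreserving]
  simp [hcomp]

theorem MeasureTheory.MeasurePreserving.integrable_birkhoffSum (hT : MeasurePreserving T μ μ)
    {g : X → ℝ} (hg : Integrable g μ) (n : ℕ) : Integrable (birkhoffSum T g n) μ :=
  integrable_finsetSum _ fun k _ => (hT.iterate k).integrable_comp_of_integrable hg

theorem MeasureTheory.MeasurePreserving.integral_birkhoffSum (hT : MeasurePreserving T μ μ)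
    {g : X → ℝ} (hg : Integrable g μ) (n : ℕ) :
    ∫ x, birkhoffSum T g n x ∂μ = n * ∫ x, g x ∂μ := by
  have hcomp : ∀ k, ∫ x, g (T^[k] x) ∂μ = ∫ x, g x ∂μ := fun k => by
    rw [← integral_map (hT.iterate k).measurable.aemeasurable
      (by rw [(hT.iterate k).map_eq]; exact hg.aestronglyMeasurable), (hT.iterate k).map_eq]
  simp only [birkhoffSum]
  rw [integral_finsetSum (f := fun k x => g (T^[k] x)) _ fun k _ =>
    (hT.iterate k).integrable_comp_of_integrable hg]
  simp [hcomp]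

open scoped Classical in
theorem MeasureTheory.MeasurePreserving.lintegral_card_iterate_mem
    (hT : MeasurePreserving T μ μ) {A : Set X} (hA : NullMeasurableSet A μ) (n : ℕ) :
    ∫⁻ x, (#{k ∈ range n | T^[k] x ∈ A} : ℝ≥0∞) ∂μ = n * μ A := by
  have hcard : ∀ x, (#{k ∈ range n | T^[k] x ∈ A} : ℝ≥0∞) = birkhoffSum T (A.indicator 1) n x :=
    fun x => by rw [natCast_card_filter]; rfl
  rw [lintegral_congr hcard,
    hT.lintegral_birkhoffSum (g := A.indicator 1) (aemeasurable_one.indicator₀ hA),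
    lintegral_indicator_one₀ hA]

end Birkhoff

section Excursions

variable {X : Type*} {T : X → X} {g : X → ℝ} {A : Set X} {L δ : ℝ} {M : ℕ}

open scoped Classical in
theorem birkhoffSum_add_mul_card_iterate_mem_le (hL : 0 ≤ L) (hδ : 0 ≤ δ)
    (hA : ∀ x ∈ A, g x ≤ -L)
    (hfwd : ∀ x ∈ A, ∀ b ∈ Icc 1 M, birkhoffSum T g b (T x) ≤ L / 2 + b * δ)
    (hbwd : ∀ y, ∀ a ∈ Icc 1 M, T^[a] y ∈ A → birkhoffSum T g a y ≤ L / 2 + a * δ)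
    {m : ℕ} (hm : m ≤ M + 1) {y : X} (hy : ∃ a < m, T^[a] y ∈ A) :
    birkhoffSum T g m y + L / 2 * #{a ∈ range m | T^[a] y ∈ A} ≤ L / 2 + m * δ := by
  induction m using Nat.strong_induction_on with
  | _ m ih =>
  -- Split at the last visit `a` to `A`: after it comes a single excursion, and the part before
  -- it is handled by induction, or by `hbwd` when it contains no visit.
  set V := {a ∈ range m | T^[a] y ∈ A}
  have hV : V.Nonempty := let ⟨a, ham, ha⟩ := hy; ⟨a, mem_filter.2 ⟨mem_range.2 ham, ha⟩⟩
  set a := V.max' hV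
  obtain ⟨ham, haA⟩ : a ∈ range m ∧ T^[a] y ∈ A := mem_filter.1 (V.max'_mem hV)
  rw [mem_range] at ham
  obtain ⟨b, hb⟩ : ∃ b, m = a + (b + 1) := ⟨m - a - 1, by omega⟩
  have hcard : V = insert a {i ∈ range a | T^[i] y ∈ A} := by
    ext i
    simp only [V, mem_filter, mem_range, mem_insert]
    constructor
    · rintro ⟨him, hiA⟩
      rcases (V.le_max' i (mem_filter.2 ⟨mem_range.2 him, hiA⟩)).lt_or_eq with hia | hia
      · exact Or.inr ⟨hia, hiA⟩
      · exact Or.inl hia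
    · rintro (rfl | ⟨hia, hiA⟩)
      · exact ⟨ham, haA⟩
      · exact ⟨hia.trans ham, hiA⟩
  have htail : birkhoffSum T g (b + 1) (T^[a] y) ≤ -L + (L / 2 + b * δ) := by
    rw [birkhoffSum_succ']
    rcases Nat.eq_zero_or_pos b with rfl | hb0
    · rw [birkhoffSum_zero, Nat.cast_zero, zero_mul]
      linarith [hA _ haA]
    · exact add_le_add (hA _ haA) (hfwd _ haA b (mem_Icc.2 ⟨hb0, by omega⟩))
  have hhead : birkhoffSum T g a y + L / 2 * #{i ∈ range a | T^[i] y ∈ A} ≤ L / 2 + a * δ := by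
    by_cases h : ∃ i < a, T^[i] y ∈ A
    · exact ih a ham (by omega) h
    · have hempty : {i ∈ range a | T^[i] y ∈ A} = ∅ := filter_eq_empty_iff.2 (by simpa using h)
      rw [hempty, card_empty, Nat.cast_zero, mul_zero, add_zero]
      rcases Nat.eq_zero_or_pos a with ha0 | ha0
      · rw [ha0, birkhoffSum_zero, Nat.cast_zero, zero_mul]
        linarith
      · exact hbwd y a (mem_Icc.2 ⟨ha0, by omega⟩) haA
  rw [hcard, card_insert_of_notMem (by simp), hb, birkhoffSum_add]
  push_cast
  linarith

open scoped Classical in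
theorem card_iterate_mem_mul_le (hL : 0 ≤ L) (hδ : 0 ≤ δ)
    (hA : ∀ x ∈ A, g x ≤ -L)
    (hfwd : ∀ x ∈ A, ∀ b ∈ Icc 1 M, birkhoffSum T g b (T x) ≤ L / 2 + b * δ)
    (hbwd : ∀ y, ∀ a ∈ Icc 1 M, T^[a] y ∈ A → birkhoffSum T g a y ≤ L / 2 + a * δ) (y : X) :
    (#{a ∈ range (M + 1) | T^[a] y ∈ A} : ℝ≥0∞) * ENNReal.ofReal (L / 2)
      ≤ ENNReal.ofReal (-birkhoffSum T g (M + 1) y) + ENNReal.ofReal (L / 2 + (M + 1) * δ) := by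
  by_cases hy : ∃ a < M + 1, T^[a] y ∈ A
  · have h := birkhoffSum_add_mul_card_iterate_mem_le hL hδ hA hfwd hbwd le_rfl hy
    push_cast at h
    rw [← ENNReal.ofReal_natCast, ← ENNReal.ofReal_mul (Nat.cast_nonneg _)]
    exact (ENNReal.ofReal_le_ofReal (by linarith)).trans ENNReal.ofReal_add_le
  · simp only [not_exists, not_and] at hy
    rw [filter_false_of_mem fun a ha => hy a (mem_range.1 ha), card_empty, Nat.cast_zero,
      zero_mul]
    exact zero_le

variable [MeasurableSpace X] {μ : Measure X}

theorem measure_le_of_birkhoffSum_excursions_le [IsProbabilityMeasure μ]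
    (hT : MeasurePreserving T μ μ) (hg : Integrable g μ) (hg0 : ∫ x, g x ∂μ = 0)
    {C : ℝ} (hC : 0 ≤ C)
    (hexp : ∫⁻ x, ENNReal.ofReal (exp (birkhoffSum T g (M + 1) x)) ∂μ ≤ ENNReal.ofReal C)
    (hL : 1 ≤ L) (hδ : 0 < δ) (hMδ : 1 ≤ (M + 1) * δ) (hAm : NullMeasurableSet A μ)
    (hA : ∀ x ∈ A, g x ≤ -L)
    (hfwd : ∀ x ∈ A, ∀ b ∈ Icc 1 M, birkhoffSum T g b (T x) ≤ L / 2 + b * δ)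
    (hbwd : ∀ y, ∀ a ∈ Icc 1 M, T^[a] y ∈ A → birkhoffSum T g a y ≤ L / 2 + a * δ) :
    μ A ≤ ENNReal.ofReal ((2 * C + 3) * δ) := by
  classical
  have hcount : ((M + 1 : ℕ) : ℝ≥0∞) * μ A * ENNReal.ofReal (L / 2)
      ≤ ENNReal.ofReal C + ENNReal.ofReal (L / 2 + (M + 1) * δ) :=
    calc ((M + 1 : ℕ) : ℝ≥0∞) * μ A * ENNReal.ofReal (L / 2)
        = ∫⁻ y, (#{a ∈ range (M + 1) | T^[a] y ∈ A} : ℝ≥0∞) * ENNReal.ofReal (L / 2) ∂μ := by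
          rw [lintegral_mul_const' _ _ ENNReal.ofReal_ne_top, hT.lintegral_card_iterate_mem hAm]
      _ ≤ ∫⁻ y, ENNReal.ofReal (-birkhoffSum T g (M + 1) y)
            + ENNReal.ofReal (L / 2 + (M + 1) * δ) ∂μ :=
          lintegral_mono (card_iterate_mem_mul_le (by linarith) hδ.le hA hfwd hbwd)
      _ ≤ ENNReal.ofReal C + ENNReal.ofReal (L / 2 + (M + 1) * δ) := by
          rw [lintegral_add_right _ measurable_const, lintegral_const, measure_univ, mul_one]
          gcongr
          refine (lintegral_ofReal_neg_le_lintegral_exp (hT.integrable_birkhoffSum hg _) ?_).trans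
            hexp
          rw [hT.integral_birkhoffSum hg, hg0, mul_zero]
  rw [← ENNReal.ofReal_toReal (measure_ne_top μ A)] at hcount ⊢
  set a := (μ A).toReal
  have ha : 0 ≤ a := ENNReal.toReal_nonneg
  rw [← ENNReal.ofReal_natCast, ← ENNReal.ofReal_mul (by positivity),
    ← ENNReal.ofReal_mul (by positivity), ← ENNReal.ofReal_add hC (by positivity),
    ENNReal.ofReal_le_ofReal_iff (by positivity)] at hcount
  push_cast at hcount
  refine ENNReal.ofReal_le_ofReal (le_of_mul_le_mul_right (a := (M + 1) * (L / 2)) ?_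
    (by positivity))
  nlinarith [mul_nonneg (sub_nonneg.2 hMδ) (by linarith : (0:ℝ) ≤ L / 2),
    mul_nonneg (by linarith : (0:ℝ) ≤ (M + 1) * δ) (by linarith : (0:ℝ) ≤ L - 1),
    mul_nonneg hC (by nlinarith : (0:ℝ) ≤ (M + 1) * δ * L - 1)]

end Excursions

section Main

variable {X : Type*} [MeasurableSpace X] {μ : Measure X} {T T' : X → X} {f : X → ℝ}

theorem measure_le_neg_le_of_lintegral_exp_birkhoffSum_le [IsProbabilityMeasure μ]
    (hT : MeasurePreserving T μ μ) (hT' : MeasurePreserving T' μ μ) (hTT' : LeftInverse T' T)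
    (hf : Integrable f μ) (hf0 : ∫ x, f x ∂μ = 0) {C : ℝ} (hC : 0 ≤ C)
    (hexp : ∀ N, 1 ≤ N →
      ∫⁻ x, ENNReal.ofReal (exp (birkhoffSum T f N x)) ∂μ ≤ ENNReal.ofReal C)
    {L δ : ℝ} (hL : 1 ≤ L) (hδ : 0 < δ) :
    μ {x | f x ≤ -L} ≤ ENNReal.ofReal ((2 * C + 3) * δ + 2 * (C * exp (-(L / 2)) / δ)) := by
  set M := ⌊δ⁻¹⌋₊
  have hMδ : 1 ≤ (M + 1) * δ :=
    calc 1 = δ⁻¹ * δ := (inv_mul_cancel₀ hδ.ne').symm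
      _ ≤ (M + 1) * δ := by gcongr; exact (Nat.lt_floor_add_one _).le
  have hS : ∀ b, AEMeasurable (birkhoffSum T f b) μ := fun b =>
    (hT.integrable_birkhoffSum hf b).aemeasurable
  set E : ℕ → Set X := fun b => {x | L / 2 + b * δ ≤ birkhoffSum T f b x}
  have hE : ∀ b, NullMeasurableSet (E b) μ := fun b =>
    nullMeasurableSet_le aemeasurable_const (hS b)
  set BadF := ⋃ b ∈ Icc 1 M, T ⁻¹' E b
  set BadB := ⋃ b ∈ Icc 1 M, T'^[b] ⁻¹' E b
  set Good := {x | f x ≤ -L} \ (BadF ∪ BadB)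
  have hGood : NullMeasurableSet Good μ :=
    (nullMeasurableSet_le hf.aemeasurable aemeasurable_const).diff <|
      (Finset.nullMeasurableSet_biUnion _ fun b _ =>
        (hE b).preimage hT.quasiMeasurePreserving).union
      (Finset.nullMeasurableSet_biUnion _ fun b _ =>
        (hE b).preimage (hT'.iterate b).quasiMeasurePreserving)
  have hμGood : μ Good ≤ ENNReal.ofReal ((2 * C + 3) * δ) :=
    measure_le_of_birkhoffSum_excursions_le hT hf hf0 hC (hexp _ (by omega)) hL hδ hMδ hGood
      (fun x hx => hx.1)
      (fun x hx b hb => not_lt.1 fun h => hx.2 (Or.inl (Set.mem_biUnion hb h.le)))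
      (fun y a ha hy => not_lt.1 fun h => hy.2 (Or.inr (Set.mem_biUnion ha (by
        rw [Set.mem_preimage, hTT'.iterate a y]; exact h.le))))
  have hμBadF := measure_biUnion_preimage_le_of_lintegral_exp_le (φ := fun _ => T) (fun _ => hT)
    hS hC hexp (L / 2) hδ M
  have hμBadB := measure_biUnion_preimage_le_of_lintegral_exp_le (φ := fun b => T'^[b])
    (fun b => hT'.iterate b) hS hC hexp (L / 2) hδ M
  calc μ {x | f x ≤ -L} ≤ μ Good + (μ BadF + μ BadB) :=
        (measure_mono (Set.subset_sdiff_union _ _)).trans <|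
          (measure_union_le _ _).trans (by gcongr; exact measure_union_le _ _)
    _ ≤ ENNReal.ofReal ((2 * C + 3) * δ) + (ENNReal.ofReal (C * exp (-(L / 2)) / δ)
          + ENNReal.ofReal (C * exp (-(L / 2)) / δ)) := by gcongr
    _ = ENNReal.ofReal ((2 * C + 3) * δ + 2 * (C * exp (-(L / 2)) / δ)) := by
        rw [← ENNReal.ofReal_add (by positivity) (by positivity),
          ← ENNReal.ofReal_add (by positivity) (by positivity), two_mul (C * exp (-(L / 2)) / δ)]

end Main

/-- If `T` is an invertible measure-preserving transformation of a probability
space, `f ∈ L¹(μ)` has zero mean and `∫ e^{S_N f} dμ ≤ C` for all `N ≥ 1`, then there is a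
constant `C'` depending only on `C` such that `μ {x : f(x) ≤ -L} ≤ C' e^{-L/6}` for all
`L ≥ 0`. -/
theorem measure_negative_part_exp_decay
    (C : ℝ) (hC : 0 ≤ C) :
    ∃ C' : ℝ, ∀ (X : Type) (_ : MeasurableSpace X) (μ : Measure X),
      IsProbabilityMeasure μ →
      ∀ (T T' : X → X), MeasurePreserving T μ μ → MeasurePreserving T' μ μ →
      Function.LeftInverse T' T → Function.RightInverse T' T →
      ∀ f : X → ℝ, Integrable f μ → (∫ x, f x ∂μ) = 0 →
      (∀ N : ℕ, 1 ≤ N →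
        (∫⁻ x, ENNReal.ofReal (Real.exp (∑ i ∈ Finset.range N, f (T^[i] x))) ∂μ)
          ≤ ENNReal.ofReal C) →
      ∀ L : ℝ, 0 ≤ L →
        μ {x | f x ≤ -L} ≤ ENNReal.ofReal (C' * Real.exp (-L / 6)) := by
  refine ⟨4 * C + 3, fun X _ μ _ T T' hT hT' hTT' _ f hf hf0 hexp L hL => ?_⟩
  rcases le_or_gt L 1 with hL1 | hL1
  · refine prob_le_one.trans (ENNReal.one_le_ofReal.2 ?_)
    nlinarith [add_one_le_exp (-L / 6)]
  refine (measure_le_neg_le_of_lintegral_exp_birkhoffSum_le hT hT' hTT' hf hf0 hC hexp hL1.le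
    (exp_pos (-(L / 4)))).trans (ENNReal.ofReal_le_ofReal ?_)
  have hratio : exp (-(L / 2)) / exp (-(L / 4)) = exp (-(L / 4)) := by
    rw [← exp_sub]; ring_nf
  have hdecay : exp (-(L / 4)) ≤ exp (-L / 6) := exp_le_exp.2 (by linarith)
  rw [mul_div_assoc, hratio]
  nlinarith [exp_pos (-(L / 4))]
end

section
/- Let A, B, C be unimodular positive-definite Hermitian 2×2 complex matrices satisfying dist(A, B) + dist(B, C) = dist(A, C). Then every nonzero vector v ∈ ℂ² attaining the supremum defining dist(A, C) (i.e. with (1/2)·log((v*Cv)/(v*Av)) = dist(A, C)) also attains the suprema defining dist(A, B) and dist(B, C); that is, (1/2)·log((v*Bv)/(v*Av)) = dist(A, B) and (1/2)·log((v*Cv)/(v*Bv)) = dist(B, C). -/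
open Matrix
open scoped ComplexOrder

/-- The hyperbolic distance between two hermitian inner products on `ℂ²` (represented by
positive-definite matrices inducing the same volume): the maximal logarithmic expansion
of the `B`-norm relative to the `A`-norm. -/
noncomputable def hdist (A B : Matrix (Fin 2) (Fin 2) ℂ) : ℝ :=
  ⨆ v : {v : Fin 2 → ℂ // v ≠ 0},
    (1 / 2) * Real.log ((star v.1 ⬝ᵥ B.mulVec v.1).re / (star v.1 ⬝ᵥ A.mulVec v.1).re)

/-!
Along a fixed vector `v` the logarithmic expansion is a cocycle: the expansions from `A` to `B`
and from `B` to `C` add up to the expansion from `A` to `C`. Each of them is bounded by the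
corresponding distance, so if the distances add up and `v` realises `dist(A, C)`, neither bound
can be strict. The only analytic input is that the suprema are finite (otherwise `⨆` would
take the junk value `0`), which follows from scale invariance and compactness of the unit sphere.
-/

namespace Matrix

variable {n : Type*} [Fintype n]

noncomputable def logExpansion (A B : Matrix n n ℂ) (v : n → ℂ) : ℝ :=
  (1 / 2) * Real.log ((star v ⬝ᵥ B *ᵥ v).re / (star v ⬝ᵥ A *ᵥ v).re)

lemma re_star_smul_dotProduct_mulVec_smul (M : Matrix n n ℂ) (r : ℝ) (v : n → ℂ) :
    (star (r • v) ⬝ᵥ M *ᵥ (r • v)).re = r ^ 2 * (star v ⬝ᵥ M *ᵥ v).re := by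
  rw [star_smul, star_trivial, mulVec_smul, smul_dotProduct, dotProduct_smul, smul_smul,
    Complex.real_smul, Complex.re_ofReal_mul, sq]

lemma logExpansion_smul (A B : Matrix n n ℂ) (v : n → ℂ) {r : ℝ} (hr : r ≠ 0) :
    logExpansion A B (r • v) = logExpansion A B v := by
  simp only [logExpansion, re_star_smul_dotProduct_mulVec_smul,
    mul_div_mul_left _ _ (pow_ne_zero 2 hr)]

lemma logExpansion_add {A B C : Matrix n n ℂ} (hA : A.PosDef) (hB : B.PosDef) (hC : C.PosDef)
    {v : n → ℂ} (hv : v ≠ 0) :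
    logExpansion A B v + logExpansion B C v = logExpansion A C v := by
  have ha : (star v ⬝ᵥ A *ᵥ v).re ≠ 0 := (hA.re_dotProduct_pos hv).ne'
  have hb : (star v ⬝ᵥ B *ᵥ v).re ≠ 0 := (hB.re_dotProduct_pos hv).ne'
  have hc : (star v ⬝ᵥ C *ᵥ v).re ≠ 0 := (hC.re_dotProduct_pos hv).ne'
  simp only [logExpansion, Real.log_div hb ha, Real.log_div hc hb, Real.log_div hc ha]
  ring

lemma continuousOn_logExpansion {A B : Matrix n n ℂ} (hA : A.PosDef) (hB : B.PosDef) :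
    ContinuousOn (logExpansion A B) {v | v ≠ 0} := by
  have hform (M : Matrix n n ℂ) : Continuous fun v : n → ℂ => (star v ⬝ᵥ M *ᵥ v).re := by
    fun_prop
  refine continuousOn_const.mul (ContinuousOn.log ?_ fun v hv => ?_)
  · exact (hform B).continuousOn.div (hform A).continuousOn
      fun v hv => (hA.re_dotProduct_pos hv).ne'
  · exact (div_pos (hB.re_dotProduct_pos hv) (hA.re_dotProduct_pos hv)).ne'

lemma bddAbove_range_logExpansion {A B : Matrix n n ℂ} (hA : A.PosDef) (hB : B.PosDef) :
    BddAbove (Set.range fun v : {v : n → ℂ // v ≠ 0} => logExpansion A B v) := by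
  have hsphere : Metric.sphere (0 : n → ℂ) 1 ⊆ {v | v ≠ 0} :=
    fun v hv => ne_zero_of_mem_sphere one_ne_zero ⟨v, hv⟩
  obtain ⟨b, hb⟩ := ((isCompact_sphere 0 1).image_of_continuousOn
    ((continuousOn_logExpansion hA hB).mono hsphere)).bddAbove
  refine ⟨b, ?_⟩
  rintro _ ⟨⟨v, hv⟩, rfl⟩
  have hnorm : ‖v‖ ≠ 0 := norm_ne_zero_iff.mpr hv
  show logExpansion A B v ≤ b
  rw [← logExpansion_smul A B v (inv_ne_zero hnorm)]
  exact hb ⟨_, by simp [norm_smul, hnorm], rfl⟩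

end Matrix

lemma logExpansion_le_hdist {A B : Matrix (Fin 2) (Fin 2) ℂ} (hA : A.PosDef) (hB : B.PosDef)
    {v : Fin 2 → ℂ} (hv : v ≠ 0) : logExpansion A B v ≤ hdist A B :=
  le_ciSup (bddAbove_range_logExpansion hA hB) (⟨v, hv⟩ : {v : Fin 2 → ℂ // v ≠ 0})

theorem maximizing_line_of_triangle_equality_general
    (A B C : Matrix (Fin 2) (Fin 2) ℂ)
    (hA : A.PosDef)
    (hB : B.PosDef)
    (hC : C.PosDef)
    (htri : hdist A B + hdist B C = hdist A C) :
    ∀ v : Fin 2 → ℂ, v ≠ 0 →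
      (1 / 2) * Real.log ((star v ⬝ᵥ C.mulVec v).re / (star v ⬝ᵥ A.mulVec v).re)
        = hdist A C →
      ((1 / 2) * Real.log ((star v ⬝ᵥ B.mulVec v).re / (star v ⬝ᵥ A.mulVec v).re)
          = hdist A B ∧
       (1 / 2) * Real.log ((star v ⬝ᵥ C.mulVec v).re / (star v ⬝ᵥ B.mulVec v).re)
          = hdist B C) := by
  intro v hv
  change logExpansion A C v = hdist A C →
    logExpansion A B v = hdist A B ∧ logExpansion B C v = hdist B C
  intro hmax
  have hsum := logExpansion_add hA hB hC hv
  have hAB := logExpansion_le_hdist hA hB hv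
  have hBC := logExpansion_le_hdist hB hC hv
  constructor <;> linarith

/-- If unimodular positive-definite Hermitian `2×2` matrices `A, B, C`
satisfy equality in the triangle inequality, `dist(A,B) + dist(B,C) = dist(A,C)`, then any
nonzero vector maximizing the expansion from `A` to `C` also maximizes the expansions from
`A` to `B` and from `B` to `C`. -/
theorem maximizing_line_of_triangle_equality
    (A B C : Matrix (Fin 2) (Fin 2) ℂ)
    (hA : A.PosDef) (hAdet : A.det = 1)
    (hB : B.PosDef) (hBdet : B.det = 1)
    (hC : C.PosDef) (hCdet : C.det = 1)
    (htri : hdist A B + hdist B C = hdist A C) :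
    ∀ v : Fin 2 → ℂ, v ≠ 0 →
      (1 / 2) * Real.log ((star v ⬝ᵥ C.mulVec v).re / (star v ⬝ᵥ A.mulVec v).re)
        = hdist A C →
      ((1 / 2) * Real.log ((star v ⬝ᵥ B.mulVec v).re / (star v ⬝ᵥ A.mulVec v).re)
          = hdist A B ∧
       (1 / 2) * Real.log ((star v ⬝ᵥ C.mulVec v).re / (star v ⬝ᵥ B.mulVec v).re)
          = hdist B C) :=
  maximizing_line_of_triangle_equality_general A B C hA hB hC htri
end

section
/- Let A and B be unimodular positive-definite Hermitian 2×2 complex matrices. Then trace(A⁻¹·B) = e^{2·dist(A,B)} + e^{−2·dist(A,B)}; equivalently, the eigenvalues of A⁻¹·B are λ and λ⁻¹ for the real number λ = e^{2·dist(A,B)} ≥ 1. -/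
open Matrix
open scoped ComplexOrder

/-! Write `A = Cᴴ C` with `C` invertible. The substitution `w = C v` turns the ratio
`v*Bv / v*Av` into the Rayleigh quotient of the positive-definite matrix `M = C⁻ᴴ B C⁻¹`,
whose supremum over `w ≠ 0` is the largest eigenvalue `λ` of `M`, attained at an eigenvector;
hence `e^{2 dist(A,B)} = λ`. Moreover `trace (A⁻¹ B) = trace M` and `det M = det B / det A = 1`,
so the two eigenvalues of `M` are `λ ≥ 1` and `λ⁻¹`. -/

namespace Matrix

variable {n 𝕜 : Type*} [Fintype n] [RCLike 𝕜]

lemma dotProduct_conjTranspose_mul_mul_mulVec (C M : Matrix n n 𝕜) (v : n → 𝕜) :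
    star v ⬝ᵥ (Cᴴ * M * C) *ᵥ v = star (C *ᵥ v) ⬝ᵥ M *ᵥ (C *ᵥ v) := by
  simp only [star_mulVec, dotProduct_mulVec, vecMul_vecMul]

lemma dotProduct_conjTranspose_mul_self_mulVec (C : Matrix n n 𝕜) (v : n → 𝕜) :
    star v ⬝ᵥ (Cᴴ * C) *ᵥ v = star (C *ᵥ v) ⬝ᵥ (C *ᵥ v) := by
  simp only [star_mulVec, dotProduct_mulVec, vecMul_vecMul]

lemma re_dotProduct_mulVec_of_mulVec_eq_smul {M : Matrix n n 𝕜} {w : n → 𝕜} {d : ℝ}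
    (h : M *ᵥ w = d • w) :
    RCLike.re (star w ⬝ᵥ M *ᵥ w) = d * RCLike.re (star w ⬝ᵥ w) := by
  rw [h, dotProduct_smul, RCLike.smul_re]

variable [DecidableEq n]

open scoped MatrixOrder in
lemma PosSemidef.exists_eq_conjTranspose_mul_self {A : Matrix n n 𝕜} (hA : A.PosSemidef) :
    ∃ C : Matrix n n 𝕜, A = Cᴴ * C := by
  simpa only [star_eq_conjTranspose] using CStarAlgebra.nonneg_iff_eq_star_mul_self.mp hA.nonneg

open scoped MatrixOrder in
lemma IsHermitian.re_dotProduct_mulVec_le {M : Matrix n n 𝕜} (hM : M.IsHermitian) {c : ℝ}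
    (hc : ∀ i, hM.eigenvalues i ≤ c) (w : n → 𝕜) :
    RCLike.re (star w ⬝ᵥ M *ᵥ w) ≤ c * RCLike.re (star w ⬝ᵥ w) := by
  have hle : M ≤ algebraMap ℝ _ c := le_algebraMap_of_spectrum_le (by
    rw [hM.spectrum_real_eq_range_eigenvalues]; rintro _ ⟨i, rfl⟩; exact hc i) hM.isSelfAdjoint
  have := (RCLike.nonneg_iff.mp ((Matrix.le_iff.mp hle).dotProduct_mulVec_nonneg w)).1
  simpa only [Algebra.algebraMap_eq_smul_one, sub_mulVec, smul_mulVec, one_mulVec,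
    dotProduct_sub, dotProduct_smul, map_sub, sub_nonneg, RCLike.smul_re] using this

section Congruence

variable {A B C M : Matrix n n 𝕜}

lemma re_dotProduct_mulVec_le_eigenvalue_mul_of_isMax (hM : M.IsHermitian) (hA : A = Cᴴ * C)
    (hB : B = Cᴴ * M * C) {i₀ : n}
    (hi₀ : ∀ i, hM.eigenvalues i ≤ hM.eigenvalues i₀) (v : n → 𝕜) :
    RCLike.re (star v ⬝ᵥ B *ᵥ v) ≤ hM.eigenvalues i₀ * RCLike.re (star v ⬝ᵥ A *ᵥ v) := by
  rw [hB, dotProduct_conjTranspose_mul_mul_mulVec, hA, dotProduct_conjTranspose_mul_self_mulVec]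
  exact hM.re_dotProduct_mulVec_le hi₀ _

lemma exists_re_dotProduct_mulVec_eq_eigenvalue_mul (hM : M.IsHermitian) (hA : A = Cᴴ * C)
    (hB : B = Cᴴ * M * C) (hC : IsUnit C) (i : n) :
    ∃ v ≠ 0, RCLike.re (star v ⬝ᵥ B *ᵥ v) = hM.eigenvalues i * RCLike.re (star v ⬝ᵥ A *ᵥ v) := by
  set e : n → 𝕜 := ⇑(hM.eigenvectorBasis i)
  have he : e ≠ 0 := (WithLp.ofLp_eq_zero 2).ne.2 <| hM.eigenvectorBasis.orthonormal.ne_zero i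
  have hCe : C *ᵥ (C⁻¹ *ᵥ e) = e := by
    rw [mulVec_mulVec, mul_nonsing_inv _ ((isUnit_iff_isUnit_det C).mp hC), one_mulVec]
  refine ⟨C⁻¹ *ᵥ e, fun h => he (by rw [← hCe, h, mulVec_zero]), ?_⟩
  rw [hB, dotProduct_conjTranspose_mul_mul_mulVec, hA, dotProduct_conjTranspose_mul_self_mulVec,
    hCe]
  exact re_dotProduct_mulVec_of_mulVec_eq_smul (hM.mulVec_eigenvectorBasis i)

end Congruence

lemma PosDef.one_le_eigenvalue_of_det_eq_one {M : Matrix n n 𝕜} (hM : M.PosDef)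
    (hdet : M.det = 1) {i₀ : n} (hi₀ : ∀ i, hM.1.eigenvalues i ≤ hM.1.eigenvalues i₀) :
    1 ≤ hM.1.eigenvalues i₀ := by
  have hprod : ∏ i, hM.1.eigenvalues i = 1 := by
    have := hM.1.det_eq_prod_eigenvalues
    rw [hdet] at this
    exact_mod_cast this.symm
  have hpow : 1 ≤ hM.1.eigenvalues i₀ ^ Fintype.card n :=
    calc 1 = ∏ i, hM.1.eigenvalues i := hprod.symm
      _ ≤ ∏ _i : n, hM.1.eigenvalues i₀ :=
        Finset.prod_le_prod (fun i _ => (hM.eigenvalues_pos i).le) (fun i _ => hi₀ i)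
      _ = hM.1.eigenvalues i₀ ^ Fintype.card n := by rw [Finset.prod_const, Finset.card_univ]
  have : Nonempty n := ⟨i₀⟩
  exact (one_le_pow_iff_of_nonneg (hM.eigenvalues_pos i₀).le Fintype.card_ne_zero).mp hpow

lemma IsHermitian.trace_eq_add_inv_of_det_eq_one {M : Matrix (Fin 2) (Fin 2) 𝕜}
    (hM : M.IsHermitian) (hdet : M.det = 1) (i : Fin 2) :
    M.trace = ((hM.eigenvalues i + (hM.eigenvalues i)⁻¹ : ℝ) : 𝕜) := by
  have hprod : hM.eigenvalues 0 * hM.eigenvalues 1 = 1 := by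
    have := hM.det_eq_prod_eigenvalues
    rw [hdet, Fin.prod_univ_two] at this
    exact_mod_cast this.symm
  rw [hM.trace_eq_sum_eigenvalues, Fin.sum_univ_two]
  fin_cases i
  · simp [inv_eq_of_mul_eq_one_right hprod]
  · simp [inv_eq_of_mul_eq_one_left hprod, add_comm]

end Matrix

lemma hdist_eq_half_log {A B : Matrix (Fin 2) (Fin 2) ℂ} (hA : A.PosDef) (hB : B.PosDef) {μ : ℝ}
    (hle : ∀ v, (star v ⬝ᵥ B *ᵥ v).re ≤ μ * (star v ⬝ᵥ A *ᵥ v).re)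
    (hattained : ∃ v ≠ 0, (star v ⬝ᵥ B *ᵥ v).re = μ * (star v ⬝ᵥ A *ᵥ v).re) :
    hdist A B = 1 / 2 * Real.log μ := by
  obtain ⟨v₀, hv₀, heq⟩ := hattained
  have hratio_le : ∀ v : {v : Fin 2 → ℂ // v ≠ 0},
      (1 / 2) * Real.log ((star v.1 ⬝ᵥ B *ᵥ v.1).re / (star v.1 ⬝ᵥ A *ᵥ v.1).re)
        ≤ 1 / 2 * Real.log μ := fun ⟨v, hv⟩ => by
    have hAv := hA.re_dotProduct_pos hv
    gcongr
    · exact div_pos (hB.re_dotProduct_pos hv) hAv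
    · exact (div_le_iff₀ hAv).mpr (hle v)
  have hratio_eq : (star v₀ ⬝ᵥ B *ᵥ v₀).re / (star v₀ ⬝ᵥ A *ᵥ v₀).re = μ := by
    have hAv₀ : 0 < (star v₀ ⬝ᵥ A *ᵥ v₀).re := hA.re_dotProduct_pos hv₀
    rw [heq, mul_div_cancel_right₀ _ hAv₀.ne']
  have : Nonempty {v : Fin 2 → ℂ // v ≠ 0} := ⟨⟨v₀, hv₀⟩⟩
  refine le_antisymm (ciSup_le hratio_le) ?_
  refine le_ciSup_of_le ⟨_, Set.forall_mem_range.mpr hratio_le⟩ ⟨v₀, hv₀⟩ ?_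
  rw [hratio_eq]

/-- For unimodular positive-definite Hermitian `2×2` matrices `A, B` one has
`trace(A⁻¹B) = e^{2 dist(A,B)} + e^{-2 dist(A,B)}`; equivalently the eigenvalues of `A⁻¹B`
are `λ` and `λ⁻¹` with `λ = e^{2 dist(A,B)} ≥ 1` (note `det(A⁻¹B) = 1`). -/
theorem trace_eq_exp_hdist (A B : Matrix (Fin 2) (Fin 2) ℂ)
    (hA : A.PosDef) (hAdet : A.det = 1)
    (hB : B.PosDef) (hBdet : B.det = 1) :
    Matrix.trace (A⁻¹ * B)
      = ((Real.exp (2 * hdist A B) + Real.exp (-(2 * hdist A B)) : ℝ) : ℂ) ∧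
    1 ≤ Real.exp (2 * hdist A B) := by
  obtain ⟨C, hAC⟩ := hA.posSemidef.exists_eq_conjTranspose_mul_self
  have hCC : Cᴴ.det * C.det = 1 := by rw [← det_mul, ← hAC, hAdet]
  have hCdet : IsUnit C.det := IsUnit.of_mul_eq_one_right _ hCC
  have hC : IsUnit C := (isUnit_iff_isUnit_det C).mpr hCdet
  set M := C⁻¹ᴴ * B * C⁻¹
  have hBM : B = Cᴴ * M * C := by
    simp only [M, ← Matrix.mul_assoc, ← conjTranspose_mul, nonsing_inv_mul _ hCdet,
      conjTranspose_one, Matrix.one_mul, nonsing_inv_mul_cancel_right _ _ hCdet]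
  have hM : M.PosDef := hB.conjTranspose_mul_mul_same
    (mulVec_injective_iff_isUnit.mpr (isUnit_nonsing_inv_iff.mpr hC))
  have hMdet : M.det = 1 :=
    calc M.det = Cᴴ.det * M.det * C.det := by linear_combination -M.det * hCC
      _ = 1 := by rw [← det_mul, ← det_mul, ← hBM, hBdet]
  have htrace : (A⁻¹ * B).trace = M.trace := by
    rw [hAC, Matrix.mul_inv_rev, ← conjTranspose_nonsing_inv, Matrix.mul_assoc, trace_mul_comm,
      Matrix.mul_assoc, ← Matrix.mul_assoc]
  obtain ⟨i₀, hi₀⟩ := Finite.exists_max hM.1.eigenvalues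
  have hdist_eq : hdist A B = 1 / 2 * Real.log (hM.1.eigenvalues i₀) :=
    hdist_eq_half_log hA hB (re_dotProduct_mulVec_le_eigenvalue_mul_of_isMax hM.1 hAC hBM hi₀)
      (exists_re_dotProduct_mulVec_eq_eigenvalue_mul hM.1 hAC hBM hC i₀)
  have hexp : Real.exp (2 * hdist A B) = hM.1.eigenvalues i₀ := by
    rw [hdist_eq, ← mul_assoc, mul_one_div_cancel two_ne_zero, one_mul,
      Real.exp_log (hM.eigenvalues_pos i₀)]
  rw [Real.exp_neg, hexp, htrace]
  exact ⟨hM.1.trace_eq_add_inv_of_det_eq_one hMdet i₀, hM.one_le_eigenvalue_of_det_eq_one hMdet hi₀⟩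
end

section
/- Let M be a unimodular positive-definite Hermitian 2×2 complex matrix with diagonal entries a = M₁₁ and d = M₂₂ (strictly positive reals). Then among all diagonal matrices diag(e^t, e^{−t}) with t ∈ ℝ, the distance dist(M, diag(e^t, e^{−t})) is minimized at e^t = √(a/d); that is, for every t ∈ ℝ, dist(M, diag(√(a/d), √(d/a))) ≤ dist(M, diag(e^t, e^{−t})). -/
open Matrix
open scoped ComplexOrder

/-- The diagonal unimodular positive matrix `diag(e^t, e^{-t})`, a point of the geodesic
of diagonal metrics determined by the splitting `ℂ² = ℂ ⊕ ℂ`. -/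
noncomputable def diagExp (t : ℝ) : Matrix (Fin 2) (Fin 2) ℂ :=
  Matrix.diagonal (fun i => if i = 0 then ((Real.exp t : ℝ) : ℂ) else ((Real.exp (-t) : ℝ) : ℂ))

/-!
Write `a = M₀₀`, `d = M₁₁`, `b = M₀₁`, so `ad - |b|² = 1`. For `D = diag(e^s, e^{-s})` put
`T = d e^s + a e^{-s} = tr (M⁻¹ D)`. If `L ≥ 1` solves `L² - T L + 1 = 0`, then `L M - D` is
positive semidefinite and singular, so `L` bounds the Rayleigh quotient `v* D v / v* M v` and a
kernel vector attains it; hence `dist(M, D) = arcosh (T / 2) / 2`. Since `arcosh` is monotone, the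
distance is minimal when `T` is, and by AM-GM `d e^s + a e^{-s}` is minimal at `e^s = √(a / d)`.
-/

open ComplexConjugate Real

namespace Matrix

section

open Complex

variable {N : Matrix (Fin 2) (Fin 2) ℂ}

lemma IsHermitian.re_star_dotProduct_mulVec_fin_two (hN : N.IsHermitian) (v : Fin 2 → ℂ) :
    (star v ⬝ᵥ N *ᵥ v).re = (N 0 0).re * normSq (v 0) + (N 1 1).re * normSq (v 1)
      + 2 * (conj (v 0) * N 0 1 * v 1).re := by
  have h10 : N 1 0 = conj (N 0 1) := (hN.apply 1 0).symm
  have h00 : (N 0 0).im = 0 := by simpa using congrArg im (hN.coe_re_apply_self 0).symm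
  have h11 : (N 1 1).im = 0 := by simpa using congrArg im (hN.coe_re_apply_self 1).symm
  simp only [dotProduct, mulVec, Fin.sum_univ_two, h10, Pi.star_apply, RCLike.star_def, add_re,
    mul_re, mul_im, add_im, conj_re, conj_im, normSq_apply, h00, h11]
  ring

lemma IsHermitian.det_fin_two_eq (hN : N.IsHermitian) :
    N.det = ((N 0 0).re * (N 1 1).re - normSq (N 0 1) : ℝ) := by
  have h10 : N 1 0 = conj (N 0 1) := (hN.apply 1 0).symm
  rw [det_fin_two, h10, mul_conj, ← hN.coe_re_apply_self 0, ← hN.coe_re_apply_self 1]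
  push_cast
  rfl

lemma posSemidef_fin_two_of_nonneg (hN : N.IsHermitian) (h0 : 0 ≤ (N 0 0).re)
    (h1 : 0 ≤ (N 1 1).re) (hdet : 0 ≤ N.det.re) : N.PosSemidef := by
  refine .of_dotProduct_mulVec_nonneg hN fun v ↦ Complex.nonneg_iff.2
    ⟨?_, (hN.im_star_dotProduct_mulVec_self v).symm⟩
  rw [hN.det_fin_two_eq, ofReal_re, normSq_eq_norm_sq] at hdet
  rw [hN.re_star_dotProduct_mulVec_fin_two, normSq_eq_norm_sq, normSq_eq_norm_sq]
  have hcross : -(‖v 0‖ * ‖N 0 1‖ * ‖v 1‖) ≤ (conj (v 0) * N 0 1 * v 1).re := by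
    refine (abs_le.1 ((abs_re_le_norm _).trans_eq ?_)).1
    rw [norm_mul, norm_mul, norm_conj]
  -- AM-GM, using `‖N 0 1‖² ≤ N₀₀ N₁₁`
  nlinarith [mul_nonneg (mul_nonneg (norm_nonneg (v 0)) (norm_nonneg (N 0 1))) (norm_nonneg (v 1)),
    mul_nonneg (sub_nonneg.2 hdet) (sq_nonneg (‖v 0‖ * ‖v 1‖)),
    sq_nonneg ((N 0 0).re * ‖v 0‖ ^ 2 - (N 1 1).re * ‖v 1‖ ^ 2),
    mul_nonneg h0 (sq_nonneg ‖v 0‖), mul_nonneg h1 (sq_nonneg ‖v 1‖)]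

lemma IsHermitian.re_mul_re_sub_normSq_eq_one (hN : N.IsHermitian) (hdet : N.det = 1) :
    (N 0 0).re * (N 1 1).re - normSq (N 0 1) = 1 := by
  exact_mod_cast hN.det_fin_two_eq.symm.trans hdet

end

theorem hdist_eq_log_div_two_of_posSemidef_of_det_eq_zero {A B : Matrix (Fin 2) (Fin 2) ℂ} {L : ℝ}
    (hA : A.PosDef) (hB : B.PosDef) (hN : ((L : ℂ) • A - B).PosSemidef)
    (hdet : ((L : ℂ) • A - B).det = 0) :
    hdist A B = log L / 2 := by
  have hform (v : Fin 2 → ℂ) : (star v ⬝ᵥ ((L : ℂ) • A - B) *ᵥ v).re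
      = L * (star v ⬝ᵥ A *ᵥ v).re - (star v ⬝ᵥ B *ᵥ v).re := by
    simp only [sub_mulVec, smul_mulVec, dotProduct_sub, dotProduct_smul, smul_eq_mul,
      Complex.sub_re, Complex.re_ofReal_mul]
  have hle (v : {v : Fin 2 → ℂ // v ≠ 0}) :
      (star v.1 ⬝ᵥ B *ᵥ v.1).re / (star v.1 ⬝ᵥ A *ᵥ v.1).re ≤ L := by
    rw [div_le_iff₀ (by exact hA.re_dotProduct_pos v.2)]
    have := (Complex.nonneg_iff.1 (hN.dotProduct_mulVec_nonneg v.1)).1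
    linarith [hform v.1]
  obtain ⟨v₀, hv₀, hker⟩ := exists_mulVec_eq_zero_iff.2 hdet
  have hattain : (star v₀ ⬝ᵥ B *ᵥ v₀).re / (star v₀ ⬝ᵥ A *ᵥ v₀).re = L := by
    have := hform v₀
    rw [hker, dotProduct_zero, Complex.zero_re] at this
    have hpos : 0 < (star v₀ ⬝ᵥ A *ᵥ v₀).re := hA.re_dotProduct_pos hv₀
    rw [div_eq_iff hpos.ne']
    linarith
  have : Nonempty {v : Fin 2 → ℂ // v ≠ 0} := ⟨⟨v₀, hv₀⟩⟩
  refine ciSup_eq_of_forall_le_of_forall_lt_exists_gt (fun v ↦ ?_) fun x hx ↦ ⟨⟨v₀, hv₀⟩, ?_⟩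
  · rw [one_div_mul_eq_div]
    gcongr
    · exact div_pos (hB.re_dotProduct_pos v.2) (hA.re_dotProduct_pos v.2)
    · exact hle v
  · rwa [hattain, one_div_mul_eq_div]

end Matrix

lemma diagExp_posDef (t : ℝ) : (diagExp t).PosDef := by
  refine posDef_diagonal_iff.2 fun i ↦ ?_
  split_ifs <;> exact_mod_cast exp_pos _

lemma isMinOn_mul_exp_add_mul_exp_neg {a d : ℝ} (ha : 0 < a) (hd : 0 < d) :
    IsMinOn (fun t ↦ d * exp t + a * exp (-t)) Set.univ (1 / 2 * log (a / d)) := by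
  refine isMinOn_univ_iff.2 fun t ↦ ?_
  rw [Real.exp_neg, Real.exp_neg]
  set c := exp (1 / 2 * log (a / d))
  have hac : a = d * c ^ 2 := by
    rw [← exp_nat_mul, ← mul_assoc, Nat.cast_ofNat, mul_one_div_cancel two_ne_zero, one_mul,
      exp_log (div_pos ha hd), mul_div_cancel₀ _ hd.ne']
  clear_value c
  subst hac
  have hdiff : d * exp t + d * c ^ 2 * (exp t)⁻¹ - (d * c + d * c ^ 2 * c⁻¹)
      = d * (exp t - c) ^ 2 / exp t := by
    field_simp
    ring
  rw [← sub_nonneg, hdiff]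
  positivity

section Unimodular

variable {M : Matrix (Fin 2) (Fin 2) ℂ}

theorem posSemidef_and_det_eq_zero_smul_sub_diagExp (hM : M.PosDef) (hMdet : M.det = 1) {s L : ℝ}
    (hL : 1 ≤ L) (hLT : L ^ 2 - ((M 1 1).re * exp s + (M 0 0).re * exp (-s)) * L + 1 = 0) :
    ((L : ℂ) • M - diagExp s).PosSemidef ∧ ((L : ℂ) • M - diagExp s).det = 0 := by
  set a := (M 0 0).re
  set d := (M 1 1).re
  set E := exp s
  set E' := exp (-s)
  set N := (L : ℂ) • M - diagExp s
  have hNherm : N.IsHermitian :=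
    (hM.1.smul (Complex.conj_ofReal L)).sub (diagExp_posDef s).1
  have hN00 : (N 0 0).re = L * a - E := by simp [N, diagExp, a, E, -Complex.ofReal_exp]
  have hN11 : (N 1 1).re = L * d - E' := by simp [N, diagExp, d, E', -Complex.ofReal_exp]
  have hN01 : Complex.normSq (N 0 1) = L ^ 2 * Complex.normSq (M 0 1) := by
    simp [N, diagExp, Complex.normSq_mul, sq]
  have hunimod := hM.1.re_mul_re_sub_normSq_eq_one hMdet
  have hEE : E * E' = 1 := by rw [← exp_add, add_neg_cancel, exp_zero]
  have hNdet : (N 0 0).re * (N 1 1).re - Complex.normSq (N 0 1) = 0 := by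
    rw [hN00, hN11, hN01]
    linear_combination L ^ 2 * hunimod + hLT + hEE
  -- the diagonal entries have nonnegative product and cannot both be negative,
  -- as `(L a) (L d) ≥ a d ≥ 1 = E E'`
  have hdiag : 0 ≤ (N 0 0).re ∧ 0 ≤ (N 1 1).re := by
    have hprod : 0 ≤ (L * a - E) * (L * d - E') := by
      rw [hN00, hN11, hN01] at hNdet
      nlinarith [Complex.normSq_nonneg (M 0 1)]
    have hbig : E * E' ≤ (L * a) * (L * d) := by
      nlinarith [Complex.normSq_nonneg (M 0 1), mul_le_mul hL hL zero_le_one (by positivity)]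
    have hLa : 0 < L * a := mul_pos (by positivity) (Complex.pos_iff.1 hM.diag_pos).1
    have hLd : 0 < L * d := mul_pos (by positivity) (Complex.pos_iff.1 hM.diag_pos).1
    rw [hN00, hN11]
    by_contra hneg
    rcases not_and_or.1 hneg with h | h <;> rw [not_le] at h
    · have h' : L * d - E' ≤ 0 := by nlinarith
      nlinarith [mul_le_mul_of_nonneg_left h' (exp_pos s).le]
    · have h' : L * a - E ≤ 0 := by nlinarith
      nlinarith [mul_le_mul_of_nonneg_left h' (exp_pos (-s)).le]
  have hdetN : N.det = 0 := by rw [hNherm.det_fin_two_eq, hNdet, Complex.ofReal_zero]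
  refine ⟨posSemidef_fin_two_of_nonneg hNherm hdiag.1 hdiag.2 ?_, hdetN⟩
  rw [hdetN, Complex.zero_re]

theorem hdist_diagExp (hM : M.PosDef) (hMdet : M.det = 1) (s : ℝ) :
    hdist M (diagExp s) = arcosh (((M 1 1).re * exp s + (M 0 0).re * exp (-s)) / 2) / 2 := by
  set a := (M 0 0).re
  set d := (M 1 1).re
  set T := d * exp s + a * exp (-s) with hT_def
  have hT : 1 ≤ T / 2 := by
    have hEE : exp s * exp (-s) = 1 := by rw [← exp_add, add_neg_cancel, exp_zero]
    have hT_sq : T ^ 2 - 4 = (d * exp s - a * exp (-s)) ^ 2 + 4 * Complex.normSq (M 0 1) := by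
      linear_combination (T + d * exp s + a * exp (-s)) * hT_def + 4 * a * d * hEE
        + 4 * hM.1.re_mul_re_sub_normSq_eq_one hMdet
    have hTpos : 0 < T := by
      have : 0 < a := (Complex.pos_iff.1 hM.diag_pos).1
      have : 0 < d := (Complex.pos_iff.1 hM.diag_pos).1
      positivity
    nlinarith [sq_nonneg (d * exp s - a * exp (-s)), Complex.normSq_nonneg (M 0 1)]
  have hLT : exp (arcosh (T / 2)) ^ 2 - T * exp (arcosh (T / 2)) + 1 = 0 := by
    have := cosh_arcosh hT
    rw [cosh_eq, Real.exp_neg] at this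
    field_simp at this
    linear_combination this
  obtain ⟨hN, hdet⟩ :=
    posSemidef_and_det_eq_zero_smul_sub_diagExp hM hMdet (one_le_exp (arcosh_nonneg hT)) hLT
  rw [hdist_eq_log_div_two_of_posSemidef_of_det_eq_zero hM (diagExp_posDef s) hN hdet, log_exp]

end Unimodular

/-- For a unimodular positive-definite Hermitian `2×2` matrix `M` with
diagonal entries `a = M₁₁`, `d = M₂₂`, the distance from `M` to the diagonal geodesic
`t ↦ diag(e^t, e^{-t})` is minimized at `e^t = √(a/d)`, i.e. at `t = (1/2)·log(a/d)`. -/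
theorem nearest_point_on_diagonal_geodesic (M : Matrix (Fin 2) (Fin 2) ℂ)
    (hM : M.PosDef) (hMdet : M.det = 1) :
    ∀ t : ℝ,
      hdist M (diagExp ((1 / 2) * Real.log ((M 0 0).re / (M 1 1).re)))
        ≤ hdist M (diagExp t) := by
  intro t
  have ha : 0 < (M 0 0).re := (Complex.pos_iff.1 hM.diag_pos).1
  have hd : 0 < (M 1 1).re := (Complex.pos_iff.1 hM.diag_pos).1
  rw [hdist_diagExp hM hMdet, hdist_diagExp hM hMdet]
  gcongr
  refine (arcosh_le_arcosh (by positivity) (by positivity)).2 ?_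
  refine div_le_div_of_nonneg_right ?_ zero_le_two
  exact isMinOn_mul_exp_add_mul_exp_neg ha hd (Set.mem_univ t)
end

section
/- Let z₀ ∈ ℂ and let g be a continuous nonnegative real-valued function on the closed unit disc {z : |z − z₀| ≤ 1}. Then there exists a point y with |y − z₀| < 1 such that, setting r := 1 − |y − z₀| and a := g(y), one has: (i) a·r ≥ g(z₀), and (ii) g(z) ≤ 2a for every z with |z − y| < r/2. -/
/-- The elementary maximization step in the Brody reparametrization
argument: for a continuous nonnegative function `g` on the closed unit disc around `z₀`,
there is a point `y` in the open disc such that, with `r := 1 - |y - z₀|` and `a := g y`,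
one has `a·r ≥ g z₀` and `g z ≤ 2a` on the disc `|z - y| < r/2`. -/
theorem brody_maximization (z₀ : ℂ) (g : ℂ → ℝ)
    (hg : ContinuousOn g (Metric.closedBall z₀ 1))
    (hg0 : ∀ z ∈ Metric.closedBall z₀ 1, 0 ≤ g z) :
    ∃ y : ℂ, dist y z₀ < 1 ∧
      g z₀ ≤ g y * (1 - dist y z₀) ∧
      ∀ z : ℂ, dist z y < (1 - dist y z₀) / 2 → g z ≤ 2 * g y := by
  set F : ℂ → ℝ := fun z => g z * (1 - dist z z₀) with hF
  have hFc : ContinuousOn F (Metric.closedBall z₀ 1) :=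
    hg.mul ((continuous_const.sub (continuous_id.dist continuous_const)).continuousOn)
  obtain ⟨y, hy, hymax⟩ := (isCompact_closedBall z₀ 1).exists_isMaxOn
    ⟨z₀, Metric.mem_closedBall_self zero_le_one⟩ hFc
  have hz₀ : z₀ ∈ Metric.closedBall z₀ 1 := Metric.mem_closedBall_self zero_le_one
  have hFz₀ : F z₀ = g z₀ := by simp [hF]
  have hmax : g z₀ ≤ F y := hFz₀ ▸ hymax hz₀
  by_cases hd : dist y z₀ < 1
  · refine ⟨y, hd, ?_, ?_⟩
    · exact hmax
    · intro z hz
      have hr : 0 < 1 - dist y z₀ := by linarith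
      have hzball : z ∈ Metric.closedBall z₀ 1 := by
        have : dist z z₀ ≤ dist z y + dist y z₀ := dist_triangle z y z₀
        simp only [Metric.mem_closedBall]
        linarith
      have h1 : (1 - dist y z₀) / 2 ≤ 1 - dist z z₀ := by
        have : dist z z₀ ≤ dist z y + dist y z₀ := dist_triangle z y z₀
        linarith
      have h2 : g z * ((1 - dist y z₀) / 2) ≤ g z * (1 - dist z z₀) :=
        mul_le_mul_of_nonneg_left h1 (hg0 z hzball)
      have h3 : g z * (1 - dist z z₀) ≤ g y * (1 - dist y z₀) := hymax hzball
      nlinarith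
  · -- max value is 0, hence g z₀ = 0 and g ≡ 0 on the open disc; take y = z₀
    push_neg at hd
    have hyd : dist y z₀ = 1 := le_antisymm (Metric.mem_closedBall.mp hy) hd
    have hFy : F y = 0 := by simp [hF, hyd]
    have hgz₀ : g z₀ = 0 := le_antisymm (by rw [hFy] at hmax; linarith) (hg0 z₀ hz₀)
    refine ⟨z₀, by norm_num, by simp [hgz₀], ?_⟩
    intro z hz
    simp only [dist_self, sub_zero] at hz
    have hzball : z ∈ Metric.closedBall z₀ 1 := by
      simp only [Metric.mem_closedBall]; linarith
    have h3 : g z * (1 - dist z z₀) ≤ F y := hymax hzball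
    rw [hFy] at h3
    have : 0 < 1 - dist z z₀ := by linarith
    nlinarith [hg0 z hzball]
end

section
/- Let (M, d) be a connected separable metric space and μ a Borel measure on M which is positive on every nonempty open ball and finite on every open ball. Let S ⊆ M be a Borel set with μ(S) > 0, and suppose there exists ε > 0 such that for μ-almost every x ∈ S one has μ(B(x, ε) \ S) = 0, where B(x, ε) is the open ball of radius ε around x. Then μ(M \ S) = 0. -/
/-!
The points near which `S` is `μ`-conull form an open set. The uniform radius `ε` makes it
closed: a limit point `x` of it is within `ε` of some `z ∈ S` (chosen off the exceptional null
set, which is possible because nonempty open sets have positive measure) with `B(z, ε)`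
essentially in `S`, and that ball is a neighbourhood of `x`. It is nonempty as `μ S > 0`, so by
connectedness it is everything, and second countability turns the local statement into
`μ Sᶜ = 0`.
-/

open MeasureTheory Filter Topology Set

namespace MeasureTheory

section Topological

variable {X : Type*} [TopologicalSpace X] [MeasurableSpace X]

/-- For an opens-measurable `μ`, the complement of the support of `μ.restrict Sᶜ`. -/
def essInterior (μ : Measure X) (S : Set X) : Set X :=
  {x | ∃ u ∈ 𝓝 x, μ (u \ S) = 0}

variable {μ : Measure X} {S : Set X}

theorem subset_essInterior_of_isOpen {U : Set X} (hU : IsOpen U) (hUS : μ (U \ S) = 0) :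
    U ⊆ essInterior μ S :=
  fun _ hx ↦ ⟨U, hU.mem_nhds hx, hUS⟩

theorem isOpen_essInterior : IsOpen (essInterior μ S) := by
  refine isOpen_iff_mem_nhds.2 fun x ⟨u, hu, huS⟩ ↦ ?_
  filter_upwards [eventually_mem_nhds_iff.2 hu] with y hy using ⟨u, hy, huS⟩

theorem exists_mem_inter_of_mem_essInterior [μ.IsOpenPosMeasure] {p : X → Prop}
    (hp : ∀ᵐ y ∂μ, p y) {x : X} (hx : x ∈ essInterior μ S) {u : Set X} (hu : u ∈ 𝓝 x) :
    ∃ z ∈ u ∩ S, p z := by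
  obtain ⟨v, hv, hvS⟩ := hx
  have hS : ∀ᵐ y ∂μ, y ∈ v → y ∈ S := by
    filter_upwards [measure_eq_zero_iff_ae_notMem.1 hvS] with y hy hyv
    by_contra hyS
    exact hy ⟨hyv, hyS⟩
  obtain ⟨z, ⟨hzu, hzv⟩, hzS, hpz⟩ := Measure.exists_mem_of_measure_ne_zero_of_ae
    (μ.measure_pos_of_mem_nhds (inter_mem hu hv)).ne'
    (ae_restrict_of_ae (hS.and hp) : ∀ᵐ y ∂μ.restrict (u ∩ v), _)
  exact ⟨z, ⟨hzu, hzS hzv⟩, hpz⟩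

theorem measure_compl_eq_zero_of_essInterior_eq_univ [SecondCountableTopology X]
    (h : essInterior μ S = univ) : μ Sᶜ = 0 := by
  refine measure_null_of_locally_null Sᶜ fun x hx ↦ ?_
  obtain ⟨u, hu, huS⟩ : x ∈ essInterior μ S := h ▸ mem_univ x
  exact ⟨u \ S, sdiff_mem_nhdsWithin_compl hu S, huS⟩

end Topological

section Metric

variable {M : Type*} [MetricSpace M] [MeasurableSpace M] {μ : Measure M}

theorem Measure.isOpenPosMeasure_of_measure_ball_pos
    (hpos : ∀ (x : M) (r : ℝ), 0 < r → 0 < μ (Metric.ball x r)) : μ.IsOpenPosMeasure := by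
  refine ⟨fun U hU ⟨x, hx⟩ ↦ ?_⟩
  obtain ⟨r, hr, hrU⟩ := Metric.isOpen_iff.1 hU x hx
  exact ((hpos x r hr).trans_le (measure_mono hrU)).ne'

theorem isClosed_essInterior_of_ae_measure_ball_diff [μ.IsOpenPosMeasure] {S : Set M} {ε : ℝ}
    (hε : 0 < ε) (hfull : ∀ᵐ x ∂μ, x ∈ S → μ (Metric.ball x ε \ S) = 0) :
    IsClosed (essInterior μ S) := by
  refine closure_subset_iff_isClosed.1 fun x hx ↦ ?_
  obtain ⟨y, hy, hxy⟩ := Metric.mem_closure_iff.1 hx ε hε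
  obtain ⟨z, ⟨hzx, hzS⟩, hz⟩ := exists_mem_inter_of_mem_essInterior hfull hy
    (Metric.isOpen_ball.mem_nhds (Metric.mem_ball'.2 hxy))
  exact subset_essInterior_of_isOpen Metric.isOpen_ball (hz hzS) (Metric.mem_ball_comm.1 hzx)

end Metric

end MeasureTheory

theorem hopf_argument_full_measure_general
    {M : Type*} [MetricSpace M] [ConnectedSpace M] [TopologicalSpace.SeparableSpace M]
    [MeasurableSpace M] (μ : Measure M)
    (hpos : ∀ (x : M) (r : ℝ), 0 < r → 0 < μ (Metric.ball x r))
    (S : Set M) (hSpos : 0 < μ S)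
    (ε : ℝ) (hε : 0 < ε)
    (hfull : ∀ᵐ x ∂μ, x ∈ S → μ (Metric.ball x ε \ S) = 0) :
    μ Sᶜ = 0 := by
  have := Measure.isOpenPosMeasure_of_measure_ball_pos hpos
  obtain ⟨z, hzS, hz⟩ := Measure.exists_mem_of_measure_ne_zero_of_ae hSpos.ne'
    (ae_restrict_of_ae hfull)
  have hne : (essInterior μ S).Nonempty :=
    ⟨z, subset_essInterior_of_isOpen Metric.isOpen_ball (hz hzS) (Metric.mem_ball_self hε)⟩
  have hclopen : IsClopen (essInterior μ S) :=
    ⟨isClosed_essInterior_of_ae_measure_ball_diff hε hfull, isOpen_essInterior⟩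
  exact measure_compl_eq_zero_of_essInterior_eq_univ (hclopen.eq_univ hne)

/-- The concluding step of the Hopf argument: on a connected separable
metric space with a Borel measure that is positive and finite on open balls, a Borel set `S`
of positive measure which essentially contains the ball `B(x, ε)` around μ-almost every of
its points (for a uniform `ε > 0`) must have full measure. -/
theorem hopf_argument_full_measure
    {M : Type*} [MetricSpace M] [ConnectedSpace M] [TopologicalSpace.SeparableSpace M]
    [MeasurableSpace M] [BorelSpace M] (μ : Measure M)
    (hpos : ∀ (x : M) (r : ℝ), 0 < r → 0 < μ (Metric.ball x r))
    (hfin : ∀ (x : M) (r : ℝ), μ (Metric.ball x r) < ⊤)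
    (S : Set M) (hS : MeasurableSet S) (hSpos : 0 < μ S)
    (ε : ℝ) (hε : 0 < ε)
    (hfull : ∀ᵐ x ∂μ, x ∈ S → μ (Metric.ball x ε \ S) = 0) :
    μ Sᶜ = 0 :=
  hopf_argument_full_measure_general μ hpos S hSpos ε hε hfull
end
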